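/- Let M ≥ 1, let (χ_m)_{m=1}^M and (κ_m)_{m=1}^M be orthonormal bases of C^M, let p : Fin M → ℝ be nonnegative, and let J ≠ K be indices with p_J ≥ p_K, and let δ be a real number with 0 < δ ≤ p_K. Define r : Fin M → ℝ by r_J = p_J + δ, r_K = p_K − δ, and r_m = p_m for m ≠ J, K. Set Ψ = ∑_{m=1}^M √(p_m) · (χ_m ⊗ κ_m) and Ξ = ∑_{m=1}^M √(r_m) · (χ_m ⊗ κ_m). Then there exist matrices C, D ∈ M_M(ℂ) with C†C + D†D = 1 and unitary matrices U, V ∈ M_M(ℂ) such that (C⊗U)|Ψ⟩⟨Ψ|(C⊗U)† + (D⊗V)|Ψ⟩⟨Ψ|(D⊗V)† = |Ξ⟩⟨Ξ|. -/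

import Mathlib

open scoped BigOperators Classical ComplexOrder
open Matrix Kronecker Filter

noncomputable section

/-! ### Vectors and states -/

/-- The standard inner product on `ι → ℂ`. -/
def cdot {ι : Type*} [Fintype ι] (u v : ι → ℂ) : ℂ := ∑ i, star (u i) * v i

/-- A unit vector. -/
def UnitVec {ι : Type*} [Fintype ι] (ψ : ι → ℂ) : Prop := cdot ψ ψ = 1

/-- An orthonormal family of vectors. -/
def OrthonormalFam {κ ι : Type*} [Fintype ι] (χ : κ → ι → ℂ) : Prop :=
  ∀ i j, cdot (χ i) (χ j) = if i = j then 1 else 0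

/-- Tensor product of vectors in `C^a` and `C^b`. -/
def tensorVec {a b : ℕ} (u : Fin a → ℂ) (v : Fin b → ℂ) : Fin a × Fin b → ℂ :=
  fun p => u p.1 * v p.2

/-- The rank-one operator `|ψ⟩⟨ψ|`. -/
def projVec {ι : Type*} (ψ : ι → ℂ) : Matrix ι ι ℂ :=
  Matrix.of fun p q => ψ p * star (ψ q)

/-- A (mixed) quantum state: a positive semidefinite matrix of trace one. -/
def IsState {ι : Type*} [Fintype ι] (ρ : Matrix ι ι ℂ) : Prop :=
  ρ.PosSemidef ∧ ρ.trace = 1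

/-- A pure state: a rank-one projection `|ψ⟩⟨ψ|` onto a unit vector. -/
def IsPureState {ι : Type*} [Fintype ι] (ρ : Matrix ι ι ℂ) : Prop :=
  ∃ ψ : ι → ℂ, UnitVec ψ ∧ ρ = projVec ψ

/-- A separable (disentangled) state: a finite convex combination of product states. -/
def IsSepState {a b : ℕ} (ρ : Matrix (Fin a × Fin b) (Fin a × Fin b) ℂ) : Prop :=
  ∃ (k : ℕ) (r : Fin k → ℝ) (ρA : Fin k → Matrix (Fin a) (Fin a) ℂ)
    (ρB : Fin k → Matrix (Fin b) (Fin b) ℂ),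
    (∀ i, 0 ≤ r i) ∧ (∑ i, r i = 1) ∧
    (∀ i, (ρA i).PosSemidef ∧ (ρA i).trace = 1) ∧
    (∀ i, (ρB i).PosSemidef ∧ (ρB i).trace = 1) ∧
    ρ = ∑ i, r i • (ρA i ⊗ₖ ρB i)

/-! ### Partial trace, Schmidt coefficients, reduced von Neumann entropy -/

/-- Partial trace over the second tensor factor. -/
def ptraceB {a b : ℕ} (ρ : Matrix (Fin a × Fin b) (Fin a × Fin b) ℂ) :
    Matrix (Fin a) (Fin a) ℂ :=
  Matrix.of fun i j => ∑ k : Fin b, ρ (i, k) (j, k)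

theorem ptraceB_projVec_isHermitian {a b : ℕ} (ψ : Fin a × Fin b → ℂ) :
    (ptraceB (projVec ψ)).IsHermitian := by
  show (ptraceB (projVec ψ))ᴴ = ptraceB (projVec ψ)
  ext i j
  simp only [Matrix.conjTranspose_apply, ptraceB, Matrix.of_apply, projVec, star_sum, star_mul',
    star_star]
  exact Finset.sum_congr rfl fun k _ => mul_comm _ _

/-- The Schmidt coefficients of a vector `ψ ∈ C^a ⊗ C^b`: the eigenvalues (with multiplicity)
of the partial trace over the second factor of `|ψ⟩⟨ψ|`. -/
def schmidtCoeffs {a b : ℕ} (ψ : Fin a × Fin b → ℂ) : Fin a → ℝ :=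
  (ptraceB_projVec_isHermitian ψ).eigenvalues

/-- The reduced von Neumann entropy of the pure state `|ψ⟩⟨ψ|`. -/
def SvN {a b : ℕ} (ψ : Fin a × Fin b → ℂ) : ℝ :=
  -∑ i, schmidtCoeffs ψ i * Real.logb 2 (schmidtCoeffs ψ i)

/-- The number of nonzero Schmidt coefficients. -/
def schmidtRank {a b : ℕ} (ψ : Fin a × Fin b → ℂ) : ℕ :=
  (Finset.univ.filter fun i => schmidtCoeffs ψ i ≠ 0).card

/-- The largest Schmidt coefficient. -/
def maxSchmidt {a b : ℕ} (ψ : Fin a × Fin b → ℂ) : ℝ := ⨆ i, schmidtCoeffs ψ i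

/-- A representative of the maximally entangled state `P₊^d`: a pure state exactly `d` of whose
Schmidt coefficients are nonzero, all equal to `1/d`. -/
def IsMaxEntRep {a b : ℕ} (d : ℕ) (ρ : Matrix (Fin a × Fin b) (Fin a × Fin b) ℂ) : Prop :=
  ∃ ψ : Fin a × Fin b → ℂ, UnitVec ψ ∧ ρ = projVec ψ ∧
    (∀ i, schmidtCoeffs ψ i = 0 ∨ schmidtCoeffs ψ i = 1 / d) ∧
    schmidtRank ψ = d

/-- The standard maximally entangled vector `Ψ₊ = (1/√d) ∑ᵢ eᵢ ⊗ eᵢ` on `C^d ⊗ C^d`. -/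
def maxEntVec (d : ℕ) : Fin d × Fin d → ℂ :=
  fun p => if p.1 = p.2 then ((1 / Real.sqrt d : ℝ) : ℂ) else 0

/-! ### Trace norm -/

/-- The trace norm of a square complex matrix: the sum of its singular values. -/
def traceNorm {ι : Type*} [Fintype ι] [DecidableEq ι] (A : Matrix ι ι ℂ) : ℝ :=
  ∑ i, Real.sqrt ((Matrix.posSemidef_conjTranspose_mul_self A).isHermitian.eigenvalues i)

/-! ### Kronecker products of bipartite states, with the canonical local reindexing -/

/-- The canonical regrouping of indices identifying `(C^a⊗C^b)⊗(C^c⊗C^d)` with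
`C^{ac}⊗C^{bd}`. -/
def pairEquiv (a b c d : ℕ) : ((Fin a × Fin b) × Fin c × Fin d) ≃ Fin (a * c) × Fin (b * d) :=
  (Equiv.prodProdProdComm (Fin a) (Fin b) (Fin c) (Fin d)).trans
    (Equiv.prodCongr finProdFinEquiv finProdFinEquiv)

/-- Kronecker product of two bipartite states, regarded (after the canonical local reindexing)
as a state on `C^{ac}⊗C^{bd}`. -/
def stateKron {a b c d : ℕ} (ρ : Matrix (Fin a × Fin b) (Fin a × Fin b) ℂ)
    (σ : Matrix (Fin c × Fin d) (Fin c × Fin d) ℂ) :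
    Matrix (Fin (a * c) × Fin (b * d)) (Fin (a * c) × Fin (b * d)) ℂ :=
  Matrix.reindex (pairEquiv a b c d) (pairEquiv a b c d) (ρ ⊗ₖ σ)

/-- The `n`-fold Kronecker power `ρ^{⊗n}` of a bipartite state, regarded (after the canonical
local reindexing grouping the `n` A-factors and the `n` B-factors) as a state on
`C^{a^n}⊗C^{b^n}`. -/
def statePow {a b : ℕ} (ρ : Matrix (Fin a × Fin b) (Fin a × Fin b) ℂ) :
    (n : ℕ) → Matrix (Fin (a ^ n) × Fin (b ^ n)) (Fin (a ^ n) × Fin (b ^ n)) ℂ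
  | 0 => 1
  | n + 1 =>
      Matrix.reindex
        (Equiv.prodCongr (finCongr (pow_succ a n).symm) (finCongr (pow_succ b n).symm))
        (Equiv.prodCongr (finCongr (pow_succ a n).symm) (finCongr (pow_succ b n).symm))
        (stateKron (statePow ρ n) ρ)

/-! ### LQCC operations -/

/-- The data of an LQCC protocol from `C^a⊗C^b` to `C^{a'}⊗C^{b'}`: `n ≥ 1` rounds; intermediate
local dimensions; at step `2k` Alice applies operators `V k`, at step `2k+1` Bob applies
operators `W k`, each labelled by a classical outcome and allowed to depend on all outcomes
obtained so far, and each family summing (over its own outcome) to the identity. -/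
structure LQCCProtocol (a b a' b' : ℕ) where
  n : ℕ
  npos : 0 < n
  adim : ℕ → ℕ
  bdim : ℕ → ℕ
  ha0 : adim 0 = a
  hb0 : bdim 0 = b
  han : adim n = a'
  hbn : bdim n = b'
  /-- the number of classical outcomes at each of the `2n` steps -/
  K : Fin (2 * n) → ℕ
  V : ∀ k : ℕ, (∀ s : Fin (2 * n), Fin (K s)) →
      Matrix (Fin (adim (k + 1))) (Fin (adim k)) ℂ
  W : ∀ k : ℕ, (∀ s : Fin (2 * n), Fin (K s)) →
      Matrix (Fin (bdim (k + 1))) (Fin (bdim k)) ℂ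
  /-- Alice's round-`k` operator depends only on the outcomes of steps `≤ 2k`. -/
  hVdep : ∀ (k : ℕ) (i i' : ∀ s : Fin (2 * n), Fin (K s)),
      (∀ s : Fin (2 * n), (s : ℕ) ≤ 2 * k → i s = i' s) → V k i = V k i'
  /-- Bob's round-`k` operator depends only on the outcomes of steps `≤ 2k+1`. -/
  hWdep : ∀ (k : ℕ) (i i' : ∀ s : Fin (2 * n), Fin (K s)),
      (∀ s : Fin (2 * n), (s : ℕ) ≤ 2 * k + 1 → i s = i' s) → W k i = W k i'
  hVnorm : ∀ (k : ℕ) (hk : k < n) (i : ∀ s : Fin (2 * n), Fin (K s)),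
      ∑ j : Fin (K ⟨2 * k, by omega⟩),
        (V k (Function.update i ⟨2 * k, by omega⟩ j))ᴴ *
          V k (Function.update i ⟨2 * k, by omega⟩ j) = 1
  hWnorm : ∀ (k : ℕ) (hk : k < n) (i : ∀ s : Fin (2 * n), Fin (K s)),
      ∑ j : Fin (K ⟨2 * k + 1, by omega⟩),
        (W k (Function.update i ⟨2 * k + 1, by omega⟩ j))ᴴ *
          W k (Function.update i ⟨2 * k + 1, by omega⟩ j) = 1

namespace LQCCProtocol

variable {a b a' b' : ℕ} (P : LQCCProtocol a b a' b')

/-- The type of full classical outcome histories of a protocol. -/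
abbrev Hist : Type := ∀ s : Fin (2 * P.n), Fin (P.K s)

/-- The product `(1⊗W_{k-1})(V_{k-1}⊗1)⋯(1⊗W₀)(V₀⊗1)` of the first `k` rounds of operators,
for a given outcome history. -/
def partialOp (i : P.Hist) :
    (k : ℕ) → Matrix (Fin (P.adim k) × Fin (P.bdim k)) (Fin (P.adim 0) × Fin (P.bdim 0)) ℂ
  | 0 => 1
  | k + 1 =>
      (((1 : Matrix (Fin (P.adim (k + 1))) (Fin (P.adim (k + 1))) ℂ) ⊗ₖ P.W k i) *
        (P.V k i ⊗ₖ (1 : Matrix (Fin (P.bdim k)) (Fin (P.bdim k)) ℂ))) *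
        partialOp i k

/-- The total Kraus operator `V_{i₁…i_{2n}}` of a protocol for a given outcome history. -/
def totalOp (i : P.Hist) : Matrix (Fin a' × Fin b') (Fin a × Fin b) ℂ :=
  Matrix.reindex (Equiv.prodCongr (finCongr P.han) (finCongr P.hbn))
    (Equiv.prodCongr (finCongr P.ha0) (finCongr P.hb0)) (P.partialOp i P.n)

end LQCCProtocol

/-- A map on matrices is an LQCC operation if it is implemented by some LQCC protocol:
`Λ(σ) = ∑ᵢ Vᵢ σ Vᵢᴴ` over all outcome histories `i`. -/
def IsLQCC {a b a' b' : ℕ}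
    (Λ : Matrix (Fin a × Fin b) (Fin a × Fin b) ℂ →
      Matrix (Fin a' × Fin b') (Fin a' × Fin b') ℂ) : Prop :=
  ∃ P : LQCCProtocol a b a' b',
    ∀ σ, Λ σ = ∑ i : P.Hist, P.totalOp i * σ * (P.totalOp i)ᴴ

/-! ### Entanglement measures and the standard conditions -/

/-- A family assigning a real number to every bipartite density matrix, for all dimensions. -/
def EntFun : Type :=
  ∀ (a b : ℕ), Matrix (Fin a × Fin b) (Fin a × Fin b) ℂ → ℝ

/-- Nonnegativity on (mixed) states. -/
def MixedNonneg (E : EntFun) : Prop :=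
  ∀ (a b : ℕ) (ρ : Matrix (Fin a × Fin b) (Fin a × Fin b) ℂ), IsState ρ → 0 ≤ E a b ρ

/-- Nonnegativity on pure states. -/
def PureNonneg (E : EntFun) : Prop :=
  ∀ (a b : ℕ) (ψ : Fin a × Fin b → ℂ), UnitVec ψ → 0 ≤ E a b (projVec ψ)

/-- Invariance under conjugation by local unitaries, on states. -/
def MixedLocalUnitaryInv (E : EntFun) : Prop :=
  ∀ (a b : ℕ) (ρ : Matrix (Fin a × Fin b) (Fin a × Fin b) ℂ), IsState ρ →
    ∀ (U : Matrix (Fin a) (Fin a) ℂ) (V : Matrix (Fin b) (Fin b) ℂ),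
      U ∈ Matrix.unitaryGroup (Fin a) ℂ → V ∈ Matrix.unitaryGroup (Fin b) ℂ →
      E a b ((U ⊗ₖ V) * ρ * (U ⊗ₖ V)ᴴ) = E a b ρ

/-- Invariance under conjugation by local unitaries, on pure states. -/
def PureLocalUnitaryInv (E : EntFun) : Prop :=
  ∀ (a b : ℕ) (ρ : Matrix (Fin a × Fin b) (Fin a × Fin b) ℂ), IsPureState ρ →
    ∀ (U : Matrix (Fin a) (Fin a) ℂ) (V : Matrix (Fin b) (Fin b) ℂ),
      U ∈ Matrix.unitaryGroup (Fin a) ℂ → V ∈ Matrix.unitaryGroup (Fin b) ℂ →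
      E a b ((U ⊗ₖ V) * ρ * (U ⊗ₖ V)ᴴ) = E a b ρ

/-- (E0): separable states have zero entanglement. -/
def CondE0 (E : EntFun) : Prop :=
  ∀ (a b : ℕ) (ρ : Matrix (Fin a × Fin b) (Fin a × Fin b) ℂ), IsState ρ → IsSepState ρ →
    E a b ρ = 0

/-- (E1)=(P1): normalization on representatives of the maximally entangled states. -/
def CondE1 (E : EntFun) : Prop :=
  ∀ (a b d : ℕ), 1 ≤ d → ∀ P : Matrix (Fin a × Fin b) (Fin a × Fin b) ℂ,
    IsMaxEntRep d P → E a b P = Real.logb 2 d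

/-- (E2): monotonicity under LQCC operations. -/
def CondE2 (E : EntFun) : Prop :=
  ∀ (a b a' b' : ℕ)
    (Λ : Matrix (Fin a × Fin b) (Fin a × Fin b) ℂ →
      Matrix (Fin a' × Fin b') (Fin a' × Fin b') ℂ)
    (σ : Matrix (Fin a × Fin b) (Fin a × Fin b) ℂ),
    IsState σ → IsLQCC Λ → E a' b' (Λ σ) ≤ E a b σ

/-- (E3): asymptotic continuity. -/
def CondE3 (E : EntFun) : Prop :=
  ∀ (A B : ℕ → ℕ) (ρ σ : ∀ n : ℕ, Matrix (Fin (A n) × Fin (B n)) (Fin (A n) × Fin (B n)) ℂ),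
    (∀ n, IsState (ρ n)) → (∀ n, IsState (σ n)) →
    Tendsto (fun n => traceNorm (ρ n - σ n)) atTop (nhds 0) →
    Tendsto (fun n =>
      (E (A n) (B n) (ρ n) - E (A n) (B n) (σ n)) / (1 + Real.logb 2 ((A n : ℝ) * (B n : ℝ))))
      atTop (nhds 0)

/-- (E3'): asymptotic continuity, where the first sequence consists of pure states. -/
def CondE3' (E : EntFun) : Prop :=
  ∀ (A B : ℕ → ℕ) (ρ σ : ∀ n : ℕ, Matrix (Fin (A n) × Fin (B n)) (Fin (A n) × Fin (B n)) ℂ),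
    (∀ n, IsPureState (ρ n)) → (∀ n, IsState (σ n)) →
    Tendsto (fun n => traceNorm (ρ n - σ n)) atTop (nhds 0) →
    Tendsto (fun n =>
      (E (A n) (B n) (ρ n) - E (A n) (B n) (σ n)) / (1 + Real.logb 2 ((A n : ℝ) * (B n : ℝ))))
      atTop (nhds 0)

/-- (E4): additivity. -/
def CondE4 (E : EntFun) : Prop :=
  ∀ (a b : ℕ) (ρ : Matrix (Fin a × Fin b) (Fin a × Fin b) ℂ), IsState ρ →
    ∀ n : ℕ, 1 ≤ n → E (a ^ n) (b ^ n) (statePow ρ n) = n * E a b ρ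

/-- (E4'): asymptotic additivity. -/
def CondE4' (E : EntFun) : Prop :=
  ∀ (a b : ℕ) (ρ : Matrix (Fin a × Fin b) (Fin a × Fin b) ℂ), IsState ρ →
    ∀ ε : ℝ, 0 < ε → ∃ N : ℕ, 0 < N ∧ ∀ n : ℕ, N ≤ n →
      E (a ^ n) (b ^ n) (statePow ρ n) / n - ε ≤ E a b ρ ∧
      E a b ρ ≤ E (a ^ n) (b ^ n) (statePow ρ n) / n + ε

/-- (E5): subadditivity. -/
def CondE5 (E : EntFun) : Prop :=
  ∀ (a b c d : ℕ) (ρ : Matrix (Fin a × Fin b) (Fin a × Fin b) ℂ)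
    (σ : Matrix (Fin c × Fin d) (Fin c × Fin d) ℂ), IsState ρ → IsState σ →
    E (a * c) (b * d) (stateKron ρ σ) ≤ E a b ρ + E c d σ

/-- (E5''): existence of the regularization. -/
def CondE5'' (E : EntFun) : Prop :=
  ∀ (a b : ℕ) (ρ : Matrix (Fin a × Fin b) (Fin a × Fin b) ℂ), IsState ρ →
    ∃ L : ℝ, Tendsto (fun n : ℕ => E (a ^ n) (b ^ n) (statePow ρ n) / n) atTop (nhds L)

/-- (E6): convexity. -/
def CondE6 (E : EntFun) : Prop :=
  ∀ (a b : ℕ) (ρ σ : Matrix (Fin a × Fin b) (Fin a × Fin b) ℂ), IsState ρ → IsState σ →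
    ∀ l : ℝ, 0 ≤ l → l ≤ 1 →
      E a b (l • ρ + (1 - l) • σ) ≤ l * E a b ρ + (1 - l) * E a b σ

/-- (E6'): convexity on finite decompositions into pure states. -/
def CondE6' (E : EntFun) : Prop :=
  ∀ (a b k : ℕ) (p : Fin k → ℝ) (ψ : Fin k → Fin a × Fin b → ℂ),
    (∀ i, 0 ≤ p i) → (∑ i, p i = 1) → (∀ i, UnitVec (ψ i)) →
    E a b (∑ i, p i • projVec (ψ i)) ≤ ∑ i, p i * E a b (projVec (ψ i))

/-- (P0): separable pure states have zero entanglement. -/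
def CondP0 (E : EntFun) : Prop :=
  ∀ (a b : ℕ) (ψA : Fin a → ℂ) (ψB : Fin b → ℂ), UnitVec (tensorVec ψA ψB) →
    E a b (projVec (tensorVec ψA ψB)) = 0

/-- (P1): normalization (same as (E1)). -/
def CondP1 (E : EntFun) : Prop := CondE1 E

/-- (P1'): `E(P₊(C²)) = 1`. -/
def CondP1' (E : EntFun) : Prop := E 2 2 (projVec (maxEntVec 2)) = 1

/-- (P2): monotonicity under LQCC operations mapping pure states to pure states. -/
def CondP2 (E : EntFun) : Prop :=
  ∀ (a b a' b' : ℕ)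
    (Λ : Matrix (Fin a × Fin b) (Fin a × Fin b) ℂ →
      Matrix (Fin a' × Fin b') (Fin a' × Fin b') ℂ)
    (σ : Matrix (Fin a × Fin b) (Fin a × Fin b) ℂ),
    IsPureState σ → IsLQCC Λ → IsPureState (Λ σ) → E a' b' (Λ σ) ≤ E a b σ

/-- (P3): asymptotic continuity on pure states. -/
def CondP3 (E : EntFun) : Prop :=
  ∀ (A B : ℕ → ℕ) (ρ σ : ∀ n : ℕ, Matrix (Fin (A n) × Fin (B n)) (Fin (A n) × Fin (B n)) ℂ),
    (∀ n, IsPureState (ρ n)) → (∀ n, IsPureState (σ n)) →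
    Tendsto (fun n => traceNorm (ρ n - σ n)) atTop (nhds 0) →
    Tendsto (fun n =>
      (E (A n) (B n) (ρ n) - E (A n) (B n) (σ n)) / (1 + Real.logb 2 ((A n : ℝ) * (B n : ℝ))))
      atTop (nhds 0)

/-- (P4): additivity on pure states. -/
def CondP4 (E : EntFun) : Prop :=
  ∀ (a b : ℕ) (ψ : Fin a × Fin b → ℂ), UnitVec ψ →
    ∀ n : ℕ, 1 ≤ n →
      E (a ^ n) (b ^ n) (statePow (projVec ψ) n) = n * E a b (projVec ψ)

/-- (P4'): asymptotic additivity on pure states. -/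
def CondP4' (E : EntFun) : Prop :=
  ∀ (a b : ℕ) (ψ : Fin a × Fin b → ℂ), UnitVec ψ →
    ∀ ε : ℝ, 0 < ε → ∃ N : ℕ, 0 < N ∧ ∀ n : ℕ, N ≤ n →
      E (a ^ n) (b ^ n) (statePow (projVec ψ) n) / n - ε ≤ E a b (projVec ψ) ∧
      E a b (projVec ψ) ≤ E (a ^ n) (b ^ n) (statePow (projVec ψ) n) / n + ε

/-! ### Entanglement of distillation and entanglement cost -/

/-- The distillable entanglement `E_D`. -/
def ED {a b : ℕ} (ρ : Matrix (Fin a × Fin b) (Fin a × Fin b) ℂ) : ℝ :=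
  sSup {r : ℝ |
    ∃ (d : ℕ → ℕ)
      (Λ : ∀ n : ℕ, Matrix (Fin (a ^ n) × Fin (b ^ n)) (Fin (a ^ n) × Fin (b ^ n)) ℂ →
        Matrix (Fin (a ^ n) × Fin (b ^ n)) (Fin (a ^ n) × Fin (b ^ n)) ℂ)
      (P : ∀ n : ℕ, Matrix (Fin (a ^ n) × Fin (b ^ n)) (Fin (a ^ n) × Fin (b ^ n)) ℂ),
      (∀ n, 0 < d n) ∧ (∀ n, IsLQCC (Λ n)) ∧ (∀ n, IsMaxEntRep (d n) (P n)) ∧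
      Tendsto (fun n => traceNorm (P n - Λ n (statePow ρ n))) atTop (nhds 0) ∧
      r = Filter.limsup (fun n : ℕ => Real.logb 2 (d n) / n) atTop}

/-- The entanglement cost `E_C`. -/
def EC {a b : ℕ} (ρ : Matrix (Fin a × Fin b) (Fin a × Fin b) ℂ) : ℝ :=
  sInf {r : ℝ |
    ∃ (d : ℕ → ℕ)
      (Λ : ∀ n : ℕ, Matrix (Fin (d n) × Fin (d n)) (Fin (d n) × Fin (d n)) ℂ →
        Matrix (Fin (a ^ n) × Fin (b ^ n)) (Fin (a ^ n) × Fin (b ^ n)) ℂ)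
      (P : ∀ n : ℕ, Matrix (Fin (d n) × Fin (d n)) (Fin (d n) × Fin (d n)) ℂ),
      (∀ n, 0 < d n) ∧ (∀ n, IsLQCC (Λ n)) ∧ (∀ n, IsMaxEntRep (d n) (P n)) ∧
      Tendsto (fun n => traceNorm (Λ n (P n) - statePow ρ n)) atTop (nhds 0) ∧
      r = Filter.liminf (fun n : ℕ => Real.logb 2 (d n) / n) atTop}


/-! ### Majorization and composition of families of maps -/

/-- For vectors arranged in decreasing order, `MajorizesDesc q p` says that `q` majorizes `p`:
for every `k`, the sum of the `k` largest entries of `q` is at least that of `p`. -/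
def MajorizesDesc {M : ℕ} (q p : Fin M → ℝ) : Prop :=
  ∀ k : ℕ, k ≤ M →
    ∑ i ∈ Finset.univ.filter (fun i : Fin M => (i : ℕ) < k), p i ≤
      ∑ i ∈ Finset.univ.filter (fun i : Fin M => (i : ℕ) < k), q i

/-- `composeFam N f = f 0 ∘ f 1 ∘ ⋯ ∘ f (N-1)` (the identity for `N = 0`). -/
def composeFam {α : Type*} : (N : ℕ) → (Fin N → α → α) → α → α
  | 0, _ => id
  | N + 1, f => f 0 ∘ composeFam N (fun i => f i.succ)

end

/-!
Write `τ` for the transposition of `J` and `K`. Because `p K ≤ p J`, the vector `p` is a convex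
combination `t • r + (1 - t) • (r ∘ τ)`. Alice measures with the Kraus operators
`C = ∑ₘ cₘ |χₘ⟩⟨χₘ|` and `D = ∑ₘ dₘ |χ_{τ m}⟩⟨χₘ|`, where `√pₘ cₘ = √(t rₘ)` and
`√pₘ dₘ = √((1 - t) r_{τ m})`; after outcome `D`, Bob permutes his basis `κ` by `τ` as well. Both
branches then produce `Ξ`, scaled by `√t` and `√(1 - t)` respectively, so the resulting mixture is
`|Ξ⟩⟨Ξ|`.
-/

theorem cdot_eq_star_dotProduct {ι : Type*} [Fintype ι] (u v : ι → ℂ) : cdot u v = star u ⬝ᵥ v :=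
  rfl

-- `OrthonormalFam` is stated with the classical decidability instance of `i = j`.
theorem OrthonormalFam.cdot_eq {ι n : Type*} [Fintype n] [DecidableEq ι] {χ : ι → n → ℂ}
    (hχ : OrthonormalFam χ) (i j : ι) : cdot (χ i) (χ j) = if i = j then 1 else 0 := by
  convert hχ i j

theorem projVec_eq_vecMulVec {ι : Type*} (ψ : ι → ℂ) : projVec ψ = vecMulVec ψ (star ψ) :=
  rfl

theorem mul_projVec_mul_conjTranspose {m n : Type*} [Fintype n] (A : Matrix m n ℂ)
    (ψ : n → ℂ) : A * projVec ψ * Aᴴ = projVec (A *ᵥ ψ) := by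
  rw [projVec_eq_vecMulVec, projVec_eq_vecMulVec, mul_vecMulVec, vecMulVec_mul, star_mulVec]

theorem projVec_ofReal_sqrt_smul {n : Type*} {t : ℝ} (ht : 0 ≤ t) (ψ : n → ℂ) :
    projVec ((Real.sqrt t : ℂ) • ψ) = (t : ℂ) • projVec ψ := by
  have hsq : (Real.sqrt t : ℂ) * (Real.sqrt t : ℂ) = t := by
    rw [← Complex.ofReal_mul, Real.mul_self_sqrt ht]
  ext i j
  simp only [projVec, of_apply, Matrix.smul_apply, Pi.smul_apply, smul_eq_mul, star_mul',
    Complex.star_def, Complex.conj_ofReal, ← hsq]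
  ring

theorem tensorVec_smul_smul {a b : ℕ} (x y : ℂ) (u : Fin a → ℂ) (v : Fin b → ℂ) :
    tensorVec (x • u) (y • v) = (x * y) • tensorVec u v := by
  ext i
  simp only [tensorVec, Pi.smul_apply, smul_eq_mul]
  ring

theorem kronecker_mulVec_tensorVec {a a' b b' : ℕ} (A : Matrix (Fin a') (Fin a) ℂ)
    (B : Matrix (Fin b') (Fin b) ℂ) (u : Fin a → ℂ) (v : Fin b → ℂ) :
    (A ⊗ₖ B) *ᵥ tensorVec u v = tensorVec (A *ᵥ u) (B *ᵥ v) := by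
  ext ⟨i, j⟩
  simp only [mulVec, dotProduct, tensorVec, Fintype.sum_prod_type, kroneckerMap_apply,
    Finset.sum_mul, Finset.mul_sum]
  rw [Finset.sum_comm]
  exact Finset.sum_congr rfl fun k _ => Finset.sum_congr rfl fun l _ => by ring

theorem OrthonormalFam.sum_vecMulVec_eq_one {n : Type*} [Fintype n] [DecidableEq n]
    {χ : n → n → ℂ} (hχ : OrthonormalFam χ) : ∑ m, vecMulVec (χ m) (star (χ m)) = 1 := by
  have hQ : (of χ)ᵀᴴ * (of χ)ᵀ = 1 := by
    ext m m'
    simpa [mul_apply, one_apply, cdot] using hχ.cdot_eq m m'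
  calc ∑ m, vecMulVec (χ m) (star (χ m)) = (of χ)ᵀ * (of χ)ᵀᴴ := by
        ext i j
        simp [Matrix.sum_apply, vecMulVec_apply, mul_apply]
    _ = 1 := mul_eq_one_comm.mp hQ

section ScaledPermOp

variable {ι n : Type*} [Fintype ι] [DecidableEq ι] [Fintype n] {χ : ι → n → ℂ}

def scaledPermOp (χ : ι → n → ℂ) (σ : Equiv.Perm ι) (c : ι → ℂ) : Matrix n n ℂ :=
  ∑ m, c m • vecMulVec (χ (σ m)) (star (χ m))

theorem scaledPermOp_mulVec (hχ : OrthonormalFam χ) (σ : Equiv.Perm ι) (c : ι → ℂ) (m : ι) :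
    scaledPermOp χ σ c *ᵥ χ m = c m • χ (σ m) := by
  simp [scaledPermOp, sum_mulVec, smul_mulVec, vecMulVec_mulVec, ← cdot_eq_star_dotProduct,
    hχ.cdot_eq]

theorem scaledPermOp_conjTranspose_mul_self (hχ : OrthonormalFam χ) (σ : Equiv.Perm ι)
    (c : ι → ℂ) :
    (scaledPermOp χ σ c)ᴴ * scaledPermOp χ σ c = scaledPermOp χ 1 (fun m => star (c m) * c m) := by
  simp [scaledPermOp, conjTranspose_sum, Finset.sum_mul_sum, vecMulVec_mul_vecMulVec,
    ← cdot_eq_star_dotProduct, hχ.cdot_eq, smul_smul, apply_ite (vecMulVec _), mul_comm]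

end ScaledPermOp

section ScaledPermOpSquare

variable {n : Type*} [Fintype n] [DecidableEq n] {χ : n → n → ℂ}

theorem scaledPermOp_one_one (hχ : OrthonormalFam χ) : scaledPermOp χ 1 1 = 1 := by
  simpa [scaledPermOp] using hχ.sum_vecMulVec_eq_one

theorem scaledPermOp_mem_unitaryGroup (hχ : OrthonormalFam χ) (σ : Equiv.Perm n) :
    scaledPermOp χ σ 1 ∈ unitaryGroup n ℂ := by
  rw [mem_unitaryGroup_iff', star_eq_conjTranspose, scaledPermOp_conjTranspose_mul_self hχ]
  simp only [Pi.one_apply, star_one, mul_one]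
  exact scaledPermOp_one_one hχ

theorem scaledPermOp_conjTranspose_mul_self_add (hχ : OrthonormalFam χ) (σ τ : Equiv.Perm n)
    {c d : n → ℂ} (hcd : ∀ m, star (c m) * c m + star (d m) * d m = 1) :
    (scaledPermOp χ σ c)ᴴ * scaledPermOp χ σ c + (scaledPermOp χ τ d)ᴴ * scaledPermOp χ τ d =
      1 := by
  rw [scaledPermOp_conjTranspose_mul_self hχ, scaledPermOp_conjTranspose_mul_self hχ,
    ← scaledPermOp_one_one hχ]
  simp only [scaledPermOp, ← Finset.sum_add_distrib, ← add_smul, hcd, Pi.one_apply]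

end ScaledPermOpSquare

def schmidtVec {ι : Type*} [Fintype ι] {a b : ℕ} (χ : ι → Fin a → ℂ) (κ : ι → Fin b → ℂ)
    (s : ι → ℂ) : Fin a × Fin b → ℂ :=
  ∑ m, s m • tensorVec (χ m) (κ m)

theorem schmidtVec_mul_left {ι : Type*} [Fintype ι] {a b : ℕ} (χ : ι → Fin a → ℂ)
    (κ : ι → Fin b → ℂ) (z : ℂ) (s : ι → ℂ) :
    schmidtVec χ κ (fun m => z * s m) = z • schmidtVec χ κ s := by
  simp only [schmidtVec, Finset.smul_sum, smul_smul]

theorem kronecker_scaledPermOp_mulVec_schmidtVec {ι : Type*} [Fintype ι] [DecidableEq ι]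
    {a b : ℕ} {χ : ι → Fin a → ℂ} {κ : ι → Fin b → ℂ} (hχ : OrthonormalFam χ)
    (hκ : OrthonormalFam κ) (σ : Equiv.Perm ι) (c d s : ι → ℂ) :
    (scaledPermOp χ σ c ⊗ₖ scaledPermOp κ σ d) *ᵥ schmidtVec χ κ s =
      schmidtVec χ κ (fun m => c (σ.symm m) * d (σ.symm m) * s (σ.symm m)) := by
  simp only [schmidtVec, mulVec_sum, mulVec_smul, kronecker_mulVec_tensorVec,
    scaledPermOp_mulVec hχ, scaledPermOp_mulVec hκ, tensorVec_smul_smul, smul_smul]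
  conv_rhs => rw [← Equiv.sum_comp σ]
  simp only [Equiv.symm_apply_apply, mul_comm]

theorem exists_sq_add_sq_eq_one_sqrt_add_mul {a b : ℝ} (ha : 0 ≤ a) (hb : 0 ≤ b) :
    ∃ c d : ℝ, c ^ 2 + d ^ 2 = 1 ∧ Real.sqrt (a + b) * c = Real.sqrt a ∧
      Real.sqrt (a + b) * d = Real.sqrt b := by
  rcases (add_nonneg ha hb).eq_or_lt with hab | hab
  · obtain ⟨rfl, rfl⟩ : a = 0 ∧ b = 0 := ⟨by linarith, by linarith⟩
    exact ⟨1, 0, by norm_num, by simp, by simp⟩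
  · have hs : Real.sqrt (a + b) ≠ 0 := (Real.sqrt_pos.2 hab).ne'
    refine ⟨Real.sqrt a / Real.sqrt (a + b), Real.sqrt b / Real.sqrt (a + b), ?_, ?_, ?_⟩
    · rw [div_pow, div_pow, Real.sq_sqrt ha, Real.sq_sqrt hb, Real.sq_sqrt hab.le, ← add_div,
        div_self hab.ne']
    · field_simp
    · field_simp

theorem exists_local_kraus_of_eq_convex_comb_perm {M : ℕ} {χ κ : Fin M → Fin M → ℂ}
    (hχ : OrthonormalFam χ) (hκ : OrthonormalFam κ) {p r : Fin M → ℝ} (hr : ∀ m, 0 ≤ r m)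
    (σ : Equiv.Perm (Fin M)) {t : ℝ} (ht₀ : 0 ≤ t) (ht₁ : t ≤ 1)
    (hp : ∀ m, p m = t * r m + (1 - t) * r (σ m)) :
    ∃ C D U V : Matrix (Fin M) (Fin M) ℂ,
      Cᴴ * C + Dᴴ * D = 1 ∧
      U ∈ unitaryGroup (Fin M) ℂ ∧ V ∈ unitaryGroup (Fin M) ℂ ∧
      (C ⊗ₖ U) * projVec (schmidtVec χ κ fun m => (Real.sqrt (p m) : ℂ)) * (C ⊗ₖ U)ᴴ +
          (D ⊗ₖ V) * projVec (schmidtVec χ κ fun m => (Real.sqrt (p m) : ℂ)) * (D ⊗ₖ V)ᴴ =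
        projVec (schmidtVec χ κ fun m => (Real.sqrt (r m) : ℂ)) := by
  have ht₁' : 0 ≤ 1 - t := by linarith
  choose c d hcd hc hd using fun m : Fin M =>
    exists_sq_add_sq_eq_one_sqrt_add_mul (mul_nonneg ht₀ (hr m)) (mul_nonneg ht₁' (hr (σ m)))
  simp only [← hp, Real.sqrt_mul ht₀, Real.sqrt_mul ht₁'] at hc hd
  refine ⟨scaledPermOp χ 1 (fun m => c m), scaledPermOp χ σ (fun m => d m),
    scaledPermOp κ 1 1, scaledPermOp κ σ 1,
    scaledPermOp_conjTranspose_mul_self_add hχ 1 σ fun m => ?_,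
    scaledPermOp_mem_unitaryGroup hκ 1, scaledPermOp_mem_unitaryGroup hκ σ, ?_⟩
  · simp only [Complex.star_def, Complex.conj_ofReal, ← sq]
    exact_mod_cast hcd m
  · have hC : (scaledPermOp χ 1 (fun m => c m) ⊗ₖ scaledPermOp κ 1 1) *ᵥ
        schmidtVec χ κ (fun m => (Real.sqrt (p m) : ℂ)) =
        (Real.sqrt t : ℂ) • schmidtVec χ κ (fun m => (Real.sqrt (r m) : ℂ)) := by
      rw [kronecker_scaledPermOp_mulVec_schmidtVec hχ hκ, ← schmidtVec_mul_left]
      congr 1; ext m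
      simp only [Pi.one_apply, mul_one]
      exact_mod_cast (mul_comm _ _).trans (hc m)
    have hD : (scaledPermOp χ σ (fun m => d m) ⊗ₖ scaledPermOp κ σ 1) *ᵥ
        schmidtVec χ κ (fun m => (Real.sqrt (p m) : ℂ)) =
        (Real.sqrt (1 - t) : ℂ) • schmidtVec χ κ (fun m => (Real.sqrt (r m) : ℂ)) := by
      rw [kronecker_scaledPermOp_mulVec_schmidtVec hχ hκ, ← schmidtVec_mul_left]
      congr 1; ext m
      simp only [Pi.one_apply, mul_one]
      exact_mod_cast (mul_comm _ _).trans ((hd (σ.symm m)).trans (by rw [σ.apply_symm_apply]))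
    rw [mul_projVec_mul_conjTranspose, mul_projVec_mul_conjTranspose, hC, hD,
      projVec_ofReal_sqrt_smul ht₀, projVec_ofReal_sqrt_smul ht₁', ← add_smul]
    simp

theorem nielsen_inductive_step_general (M : ℕ) (χ κ : Fin M → Fin M → ℂ)
    (hχ : OrthonormalFam χ) (hκ : OrthonormalFam κ)
    (p : Fin M → ℝ) (hp0 : ∀ m, 0 ≤ p m) (J K : Fin M) (hJK : J ≠ K)
    (hpJK : p K ≤ p J) (δ : ℝ) (hδ0 : 0 < δ) (hδK : δ ≤ p K)
    (r : Fin M → ℝ)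
    (hr : r = Function.update (Function.update p J (p J + δ)) K (p K - δ)) :
    ∃ C D U V : Matrix (Fin M) (Fin M) ℂ,
      Cᴴ * C + Dᴴ * D = 1 ∧
      U ∈ Matrix.unitaryGroup (Fin M) ℂ ∧ V ∈ Matrix.unitaryGroup (Fin M) ℂ ∧
      (C ⊗ₖ U) * projVec (∑ m, (Real.sqrt (p m) : ℂ) • tensorVec (χ m) (κ m)) * (C ⊗ₖ U)ᴴ +
          (D ⊗ₖ V) * projVec (∑ m, (Real.sqrt (p m) : ℂ) • tensorVec (χ m) (κ m)) *
            (D ⊗ₖ V)ᴴ =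
        projVec (∑ m, (Real.sqrt (r m) : ℂ) • tensorVec (χ m) (κ m)) := by
  have hw : 0 < p J - p K + 2 * δ := by linarith
  have hr_apply : ∀ m, r m = if m = K then p K - δ else if m = J then p J + δ else p m := by
    intro m
    simp only [hr, Function.update_apply]
  have hr0 : ∀ m, 0 ≤ r m := by
    intro m
    rw [hr_apply]
    split_ifs <;> linarith [hp0 m]
  -- `t` is forced by the `J`-coordinate: `p J = t * (p J + δ) + (1 - t) * (p K - δ)`.
  set t := (p J - p K + δ) / (p J - p K + 2 * δ)
  have ht : t * (p J - p K + 2 * δ) = p J - p K + δ := div_mul_cancel₀ _ hw.ne'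
  refine exists_local_kraus_of_eq_convex_comb_perm hχ hκ hr0 (Equiv.swap J K) (t := t)
    (div_nonneg (by linarith) hw.le) ((div_le_one hw).2 (by linarith)) fun m => ?_
  rcases eq_or_ne m J with rfl | hmJ
  · simp only [hr_apply, Equiv.swap_apply_left, hJK, if_true, if_false]
    linear_combination -ht
  rcases eq_or_ne m K with rfl | hmK
  · simp only [hr_apply, Equiv.swap_apply_right, hJK, if_true, if_false]
    linear_combination ht
  · simp only [hr_apply, Equiv.swap_apply_of_ne_of_ne hmJ hmK, hmJ, hmK, if_false]
    ring

/-- The inductive step in the proof of the hard direction of Nielsen's theorem: transferring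
weight `δ` from a smaller coefficient `p_K` to a larger one `p_J` can be realized exactly by a
two-Kraus-operator map of the local form `ω ↦ (C⊗U)ω(C⊗U)ᴴ + (D⊗V)ω(D⊗V)ᴴ`. -/
theorem nielsen_inductive_step (M : ℕ) (hM : 1 ≤ M) (χ κ : Fin M → Fin M → ℂ)
    (hχ : OrthonormalFam χ) (hκ : OrthonormalFam κ)
    (p : Fin M → ℝ) (hp0 : ∀ m, 0 ≤ p m) (J K : Fin M) (hJK : J ≠ K)
    (hpJK : p K ≤ p J) (δ : ℝ) (hδ0 : 0 < δ) (hδK : δ ≤ p K)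
    (r : Fin M → ℝ)
    (hr : r = Function.update (Function.update p J (p J + δ)) K (p K - δ)) :
    ∃ C D U V : Matrix (Fin M) (Fin M) ℂ,
      Cᴴ * C + Dᴴ * D = 1 ∧
      U ∈ Matrix.unitaryGroup (Fin M) ℂ ∧ V ∈ Matrix.unitaryGroup (Fin M) ℂ ∧
      (C ⊗ₖ U) * projVec (∑ m, (Real.sqrt (p m) : ℂ) • tensorVec (χ m) (κ m)) * (C ⊗ₖ U)ᴴ +
          (D ⊗ₖ V) * projVec (∑ m, (Real.sqrt (p m) : ℂ) • tensorVec (χ m) (κ m)) *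
            (D ⊗ₖ V)ᴴ =
        projVec (∑ m, (Real.sqrt (r m) : ℂ) • tensorVec (χ m) (κ m)) :=
  nielsen_inductive_step_general M χ κ hχ hκ p hp0 J K hJK hpJK δ hδ0 hδK r hr
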